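/- Let g be a unimodular real Lie algebra of dimension 2n endowed with an Abelian linear D-complex structure g = g⁺ ⊕ g⁻. Then the Chevalley–Eilenberg differential vanishes on forms of type (n,0) and of type (0,n): if α ∈ Λ^n g* satisfies α(x_1,…,x_n) = 0 whenever at least one x_i lies in g⁻, then dα = 0; and likewise if α(x_1,…,x_n) = 0 whenever at least one x_i lies in g⁺, then dα = 0. -/

import Mathlib

open scoped BigOperators

noncomputable section ChevalleyEilenberg

variable (g : Type*) [LieRing g] [LieAlgebra ℝ g]

/-- The Chevalley–Eilenberg differential of an alternating `k`-form on a real Lie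
algebra, as a function on `(k+1)`-tuples:
`(dα)(x_0,…,x_k) = Σ_{i<j} (−1)^{i+j} α([x_i,x_j], x_0,…,x̂_i,…,x̂_j,…,x_k)`. -/
def ceD : {k : ℕ} → AlternatingMap ℝ g ℝ (Fin k) → ((Fin (k + 1) → g) → ℝ)
  | 0, _ => 0
  | (k + 1), α => fun x =>
      ∑ i : Fin (k + 2), ∑ j : Fin (k + 2),
        if hij : (i : ℕ) < (j : ℕ) then
          (-1 : ℝ) ^ ((i : ℕ) + (j : ℕ)) *
            α (fun m : Fin (k + 1) =>
                if hm : (m : ℕ) = 0 then ⁅x i, x j⁆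
                else
                  x (j.succAbove
                      ((⟨(i : ℕ), by omega⟩ : Fin (k + 1)).succAbove
                        (⟨(m : ℕ) - 1, by omega⟩ : Fin k))))
        else 0

theorem ceD_zero {k : ℕ} : ceD g (0 : AlternatingMap ℝ g ℝ (Fin k)) = 0 := by
  cases k with
  | zero => rfl
  | succ k => funext x; simp [ceD]

theorem ceD_add {k : ℕ} (α β : AlternatingMap ℝ g ℝ (Fin k)) :
    ceD g (α + β) = ceD g α + ceD g β := by
  cases k with
  | zero => funext x; simp [ceD]
  | succ k =>
    funext x
    simp only [ceD, Pi.add_apply, AlternatingMap.add_apply]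
    rw [← Finset.sum_add_distrib]
    refine Finset.sum_congr rfl fun i _ => ?_
    rw [← Finset.sum_add_distrib]
    refine Finset.sum_congr rfl fun j _ => ?_
    split
    · ring
    · ring

theorem ceD_smul {k : ℕ} (c : ℝ) (α : AlternatingMap ℝ g ℝ (Fin k)) :
    ceD g (c • α) = c • ceD g α := by
  cases k with
  | zero => funext x; simp [ceD]
  | succ k =>
    funext x
    simp only [ceD, Pi.smul_apply, AlternatingMap.smul_apply, smul_eq_mul,
      Finset.mul_sum]
    refine Finset.sum_congr rfl fun i _ => ?_
    refine Finset.sum_congr rfl fun j _ => ?_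
    split
    · ring
    · ring

/-- The space of `d`-closed `k`-forms. -/
def Zsub (k : ℕ) : Submodule ℝ (AlternatingMap ℝ g ℝ (Fin k)) where
  carrier := {α | ceD g α = 0}
  add_mem' := by
    intro a b ha hb
    simp only [Set.mem_setOf_eq] at *
    rw [ceD_add, ha, hb, add_zero]
  zero_mem' := by
    simpa only [Set.mem_setOf_eq] using ceD_zero g
  smul_mem' := by
    intro c a ha
    simp only [Set.mem_setOf_eq] at *
    rw [ceD_smul, ha, smul_zero]

/-- The space of `d`-exact `k`-forms. -/
def Bsub : (k : ℕ) → Submodule ℝ (AlternatingMap ℝ g ℝ (Fin k))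
  | 0 => ⊥
  | (k + 1) =>
    { carrier := {α | ∃ β : AlternatingMap ℝ g ℝ (Fin k), ceD g β = ⇑α}
      add_mem' := by
        rintro a b ⟨βa, hβa⟩ ⟨βb, hβb⟩
        exact ⟨βa + βb, by rw [ceD_add, hβa, hβb]; ext x; simp⟩
      zero_mem' := ⟨0, by rw [ceD_zero]; ext x; simp⟩
      smul_mem' := by
        rintro c a ⟨β, hβ⟩
        exact ⟨c • β, by rw [ceD_smul, hβ]; rfl⟩ }

/-- The `k`-th Lie algebra cohomology `H^k(g;ℝ) = ker d / im d`. -/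
abbrev Hcoh (k : ℕ) : Type _ :=
  @HasQuotient.Quotient ↥(Zsub g k) (Submodule ℝ ↥(Zsub g k))
    (@Submodule.hasQuotient ℝ ↥(Zsub g k) Real.instRing (Zsub g k).addCommGroup (Zsub g k).module)
    ((Bsub g k).comap (Zsub g k).subtype)

/-- The cohomology class of a `d`-closed `k`-form. -/
def cls {k : ℕ} (α : AlternatingMap ℝ g ℝ (Fin k)) (hα : ceD g α = 0) : Hcoh g k :=
  Submodule.Quotient.mk (⟨α, hα⟩ : Zsub g k)

/-- The subgroup `H^{k+}_K(g;ℝ)` of classes admitting a `d`-closed `K`-invariant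
representative.  (The set of such classes is a linear subspace, so taking its span
does not enlarge it.) -/
def Hplus (K : g →ₗ[ℝ] g) (k : ℕ) : Submodule ℝ (Hcoh g k) :=
  Submodule.span ℝ
    {c | ∃ (α : AlternatingMap ℝ g ℝ (Fin k)) (hα : ceD g α = 0),
        α.compLinearMap K = α ∧ c = cls g α hα}

/-- The subgroup `H^{k−}_K(g;ℝ)` of classes admitting a `d`-closed
`K`-anti-invariant representative. -/
def Hminus (K : g →ₗ[ℝ] g) (k : ℕ) : Submodule ℝ (Hcoh g k) :=
  Submodule.span ℝ
    {c | ∃ (α : AlternatingMap ℝ g ℝ (Fin k)) (hα : ceD g α = 0),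
        α.compLinearMap K = -α ∧ c = cls g α hα}

/-- The wedge product of `k` linear functionals, as an alternating `k`-form. -/
def wedge {k : ℕ} (fs : Fin k → (g →ₗ[ℝ] ℝ)) :
    AlternatingMap ℝ g ℝ (Fin k) :=
  MultilinearMap.alternatization
    ((MultilinearMap.mkPiAlgebra ℝ (Fin k) ℝ).compLinearMap fs)

end ChevalleyEilenberg

noncomputable section

/-!
By multilinearity of `dα` and `g = g⁺ ⊕ g⁻` it suffices to evaluate `dα` on tuples whose entries
each lie in `g⁺` or in `g⁻`; let `α` be of type `(n,0)`. If all entries lie in `g⁺`, every bracket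
vanishes. Otherwise some `x_s` lies in `g⁻`. Since `α` vanishes as soon as `x_s` is one of its
arguments, only the terms of `dα(x)` that bracket `x_s` with another entry survive, and they add up
to `±(ad x_s · α)(x without x_s)`, where `ad x_s` acts on forms as a derivation. Now `ad x_s`
vanishes on the abelian `g⁻`, and `α` is a top-degree form on `g⁺` that kills `g⁻`; so this
derivation multiplies `α` by `tr (ad x_s)`, which is zero by unimodularity.
-/

open Function Module

theorem MultilinearMap.ext_of_codisjoint {R V W ι : Type*} [CommRing R] [AddCommGroup V]
    [Module R V] [AddCommGroup W] [Module R W] [Finite ι] {p q : Submodule R V}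
    (hpq : Codisjoint p q) {f f' : MultilinearMap R (fun _ : ι => V) W}
    (h : ∀ v : ι → V, (∀ i, v i ∈ p ∨ v i ∈ q) → f v = f' v) : f = f' :=
  MultilinearMap.ext_of_span_eq_top (g := fun _ (v : ↥((p : Set V) ∪ q)) => (v : V))
    (fun _ => by rw [Subtype.range_coe, Submodule.span_union, Submodule.span_eq,
      Submodule.span_eq, hpq.eq_top])
    fun w => h _ fun i => (w i).2

theorem Submodule.sub_projection_apply_mem {R M : Type*} [Ring R] [AddCommGroup M] [Module R M]
    {p q : Submodule R M} (hpq : IsCompl p q) (x : M) : x - p.projection q hpq x ∈ q := by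
  rw [← projection_eq_self_sub_projection]
  exact projection_apply_mem _ _

namespace AlternatingMap

variable {R M N ι : Type*} [CommRing R] [AddCommGroup M] [Module R M] [AddCommGroup N]
  [Module R N] [DecidableEq ι]

theorem map_update_basis (e : Basis ι R M) (α : M [⋀^ι]→ₗ[R] N) (i : ι) (z : M) :
    α (update e i z) = e.coord i z • α e := by
  change α.toMultilinearMap.toLinearMap e i z = (e.coord i).smulRight (α e) z
  congr 1
  refine e.ext fun j => ?_
  rcases eq_or_ne j i with rfl | hji
  · simp
  · have hrep : update e i (e j) j = update e i (e j) i := by simp [update_of_ne hji]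
    simpa [Finsupp.single_apply, hji] using α.map_eq_zero_of_eq _ hrep hji

theorem map_update_eq_of_sub_mem {q : Submodule R M} (α : M [⋀^ι]→ₗ[R] N)
    (hα : ∀ v, (∃ i, v i ∈ q) → α v = 0) (v : ι → M) (i : ι) {a b : M} (hab : a - b ∈ q) :
    α (update v i a) = α (update v i b) := by
  rw [← sub_add_cancel a b, α.map_update_add, hα _ ⟨i, by simpa⟩, zero_add]

theorem map_cons_removeNth {n : ℕ} (α : M [⋀^Fin (n + 1)]→ₗ[R] N) (m : Fin (n + 1)) (z : M)
    (w : Fin (n + 1) → M) :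
    α (Fin.cons z (m.removeNth w)) = (-1 : R) ^ (m : ℕ) • α (update w m z) := by
  rw [← Fin.insertNth_removeNth, ← Matrix.vecCons, ← α.neg_one_pow_smul_map_insertNth,
    ← Int.cast_smul_eq_zsmul R]
  push_cast
  rfl

private theorem update_id_apply_eq_update (A : M →ₗ[R] M) (i : ι) (v : ι → M) :
    (fun l => update (fun _ => LinearMap.id) i A l (v l)) = update v i (A (v i)) := by
  ext l
  rcases eq_or_ne l i with rfl | h <;> simp [update_of_ne, *]

variable [Fintype ι]

/-- The derivative at `t = 0` of `α.compLinearMap (1 + t • A)`. -/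
def compLinearMapDeriv (α : M [⋀^ι]→ₗ[R] N) (A : M →ₗ[R] M) : M [⋀^ι]→ₗ[R] N where
  toMultilinearMap :=
    ∑ i, α.toMultilinearMap.compLinearMap (update (fun _ => LinearMap.id) i A)
  map_eq_zero_of_eq' v i j hv hij := by
    rw [MultilinearMap.toFun_eq_coe]
    simp only [FunLike.coe_sum, Finset.sum_apply, MultilinearMap.compLinearMap_apply,
      coe_multilinearMap, update_id_apply_eq_update]
    rw [Fintype.sum_eq_add i j hij fun m ⟨hmi, hmj⟩ => α.map_eq_zero_of_eq _
      (by rwa [update_of_ne hmi.symm, update_of_ne hmj.symm]) hij]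
    have hswap : update v j (A (v j)) = update v i (A (v i)) ∘ Equiv.swap i j := by
      ext l
      rcases eq_or_ne l i with rfl | hli
      · simp [update_of_ne hij, update_of_ne hij.symm, hv]
      rcases eq_or_ne l j with rfl | hlj
      · simp [hv]
      · simp [Equiv.swap_apply_of_ne_of_ne hli hlj, update_of_ne hli, update_of_ne hlj]
    rw [hswap, add_comm, α.map_swap_add _ hij]

@[simp]
theorem compLinearMapDeriv_apply (α : M [⋀^ι]→ₗ[R] N) (A : M →ₗ[R] M) (v : ι → M) :
    α.compLinearMapDeriv A v = ∑ i, α (update v i (A (v i))) := by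
  simp [compLinearMapDeriv, update_id_apply_eq_update]

theorem compLinearMapDeriv_eq_trace_smul (e : Basis ι R M) (α : M [⋀^ι]→ₗ[R] R)
    (A : M →ₗ[R] M) : α.compLinearMapDeriv A = LinearMap.trace R M A • α := by
  rw [(α.compLinearMapDeriv A).eq_smul_basis_det e, α.eq_smul_basis_det e, smul_smul]
  congr 1
  simp [map_update_basis, LinearMap.trace_eq_matrix_trace R e, Matrix.trace,
    LinearMap.toMatrix_apply, Finset.sum_mul, Basis.det_self]

end AlternatingMap

section IsCompl

variable {K V : Type*} [Field K] [AddCommGroup V] [Module K V] [FiniteDimensional K V]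
  {p q : Submodule K V}

theorem LinearMap.trace_projectionOnto_comp_comp_subtype (hpq : IsCompl p q)
    (A : V →ₗ[K] V) (hA : ∀ z ∈ q, A z = 0) :
    trace K p (p.projectionOnto q hpq ∘ₗ A ∘ₗ p.subtype) = trace K V A := by
  rw [trace_comp_comm']
  congr 1
  ext z
  rw [comp_apply, comp_apply, Submodule.subtype_apply, Submodule.coe_projectionOnto_apply,
    eq_comm, ← sub_eq_zero, ← map_sub]
  exact hA _ (Submodule.sub_projection_apply_mem hpq z)

theorem AlternatingMap.compLinearMapDeriv_eq_trace_smul_of_isCompl {ι : Type*} [Fintype ι]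
    [DecidableEq ι] (hpq : IsCompl p q) (hp : finrank K p = Fintype.card ι)
    (α : V [⋀^ι]→ₗ[K] K) (hα : ∀ v, (∃ i, v i ∈ q) → α v = 0)
    (A : V →ₗ[K] V) (hA : ∀ z ∈ q, A z = 0) :
    α.compLinearMapDeriv A = LinearMap.trace K V A • α := by
  refine coe_multilinearMap_injective
    (MultilinearMap.ext_of_codisjoint hpq.codisjoint fun w hw => ?_)
  simp only [coe_multilinearMap, compLinearMapDeriv_apply, smul_apply, smul_eq_mul]
  by_cases hq : ∃ i, w i ∈ q
  · obtain ⟨i, hi⟩ := hq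
    rw [hα w ⟨i, hi⟩, mul_zero]
    refine Finset.sum_eq_zero fun m _ => ?_
    rcases eq_or_ne m i with rfl | hmi
    · rw [hA _ hi, α.map_update_zero]
    · exact hα _ ⟨i, by rwa [update_of_ne hmi.symm]⟩
  simp only [not_exists] at hq
  -- `α` restricts to a top-degree form on `p`, on which `A` acts through its `p`-block
  set w' : ι → p := fun i => ⟨w i, (hw i).resolve_right (hq i)⟩
  let e := (finBasisOfFinrankEq K p hp).reindex (Fintype.equivFin ι).symm
  have key := DFunLike.congr_fun ((α.compLinearMap p.subtype).compLinearMapDeriv_eq_trace_smul e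
    (p.projectionOnto q hpq ∘ₗ A ∘ₗ p.subtype)) w'
  rw [LinearMap.trace_projectionOnto_comp_comp_subtype hpq A hA] at key
  simp only [compLinearMapDeriv_apply, smul_apply, compLinearMap_apply, smul_eq_mul] at key
  change _ = _ * α w at key
  convert key using 2 with m
  rw [α.map_update_eq_of_sub_mem hα w m (Submodule.sub_projection_apply_mem hpq (A (w m)))]
  congr 1
  ext l
  rcases eq_or_ne l m with rfl | h <;> simp [update_of_ne, *, w']

end IsCompl

theorem neg_one_pow_add_mul_neg_one_pow {R : Type*} [CommRing R] (a b : ℕ) :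
    (-1 : R) ^ (a + b) * (-1) ^ a = (-1) ^ b := by
  rw [pow_add, mul_right_comm, ← pow_add, ← two_mul, pow_mul, neg_one_sq, one_pow, one_mul]

theorem Fin.succAbove_castLT {n : ℕ} {i j : Fin (n + 2)} (h : (i : ℕ) < j) :
    j.succAbove (i.castLT (by omega)) = i := by
  rw [succAbove_of_castSucc_lt _ _ h, castSucc_castLT]

theorem Fin.removeNth_castLT_removeNth_succ {α : Type*} {n : ℕ} (x : Fin (n + 2) → α)
    {s : Fin (n + 2)} {m : Fin (n + 1)} (h : (s : ℕ) ≤ m) :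
    (s.castLT (by omega)).removeNth (m.succ.removeNth x) = m.removeNth (s.removeNth x) := by
  rw [removeNth_removeNth_eq_swap, predAbove_succ_of_le _ _ h,
    succAbove_of_castSucc_lt _ _ (lt_def.2 (by simp only [castSucc_castLT, val_succ]; omega)),
    castSucc_castLT]

section CEDifferential

variable {g : Type*} [LieRing g] [LieAlgebra ℝ g] {k : ℕ}

def ceSummand (α : AlternatingMap ℝ g ℝ (Fin (k + 1))) (x : Fin (k + 2) → g)
    (i j : Fin (k + 2)) : ℝ :=
  if h : (i : ℕ) < j then
    (-1) ^ ((i : ℕ) + j) * α (Fin.cons ⁅x i, x j⁆ ((i.castLT (by omega)).removeNth (j.removeNth x)))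
  else 0

theorem ceD_succ_apply (α : AlternatingMap ℝ g ℝ (Fin (k + 1))) (x : Fin (k + 2) → g) :
    ceD g α x = ∑ i, ∑ j, ceSummand α x i j := by
  refine Fintype.sum_congr _ _ fun i => Fintype.sum_congr _ _ fun j => ?_
  refine dite_congr rfl (fun h => ?_) fun _ => rfl
  congr 2
  ext m
  exact Fin.cases rfl (fun r => dif_neg (Nat.succ_ne_zero r)) m

/-- Built from curried forms, so that multilinearity in all `k + 2` arguments comes for free. -/
def ceTerm (α : AlternatingMap ℝ g ℝ (Fin (k + 1))) (i : Fin (k + 1)) (j : Fin (k + 2)) :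
    MultilinearMap ℝ (fun _ : Fin (k + 2) => g) ℝ :=
  LinearMap.uncurryMid j
    ((MultilinearMap.curryMidLinearEquiv ℝ (fun _ => g) ℝ i).symm.toLinearMap ∘ₗ
      (LinearMap.mk₂ ℝ (fun y z => α.toMultilinearMap.curryLeft ⁅y, z⁆)
        (fun _ _ _ => by rw [add_lie, map_add]) (fun _ _ _ => by rw [smul_lie, map_smul])
        (fun _ _ _ => by rw [lie_add, map_add]) (fun _ _ _ => by rw [lie_smul, map_smul])).flip)

theorem ceTerm_apply (α : AlternatingMap ℝ g ℝ (Fin (k + 1))) (i : Fin (k + 1))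
    (j : Fin (k + 2)) (x : Fin (k + 2) → g) :
    ceTerm α i j x = α (Fin.cons ⁅x (j.succAbove i), x j⁆ (i.removeNth (j.removeNth x))) :=
  rfl

def ceDMultilinear (α : AlternatingMap ℝ g ℝ (Fin (k + 1))) :
    MultilinearMap ℝ (fun _ : Fin (k + 2) => g) ℝ :=
  ∑ i : Fin (k + 2), ∑ j : Fin (k + 2),
    if h : (i : ℕ) < j then ((-1 : ℝ) ^ ((i : ℕ) + j)) • ceTerm α (i.castLT (by omega)) j else 0

theorem coe_ceDMultilinear (α : AlternatingMap ℝ g ℝ (Fin (k + 1))) :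
    ⇑(ceDMultilinear α) = ceD g α := by
  ext x
  rw [ceD_succ_apply]
  simp only [ceDMultilinear, FunLike.coe_sum, Finset.sum_apply]
  refine Fintype.sum_congr _ _ fun i => Fintype.sum_congr _ _ fun j => ?_
  rw [ceSummand]
  split_ifs with h
  · rw [smul_apply, ceTerm_apply, Fin.succAbove_castLT h, smul_eq_mul]
  · rfl

theorem ceSummand_eq_zero_of_ne (α : AlternatingMap ℝ g ℝ (Fin (k + 1)))
    {x : Fin (k + 2) → g} {s : Fin (k + 2)}
    (hs : ∀ v : Fin (k + 1) → g, (∃ r, v r = x s) → α v = 0) {i j : Fin (k + 2)}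
    (hi : i ≠ s) (hj : j ≠ s) : ceSummand α x i j = 0 := by
  rw [ceSummand]
  split_ifs with h
  · obtain ⟨s₁, rfl⟩ := Fin.exists_succAbove_eq hj.symm
    have : s₁ ≠ i.castLT (by omega) := by
      rintro rfl
      exact hi (Fin.succAbove_castLT h).symm
    obtain ⟨r, rfl⟩ := Fin.exists_succAbove_eq this
    rw [hs _ ⟨r.succ, rfl⟩, mul_zero]
  · rfl

theorem ceSummand_add_ceSummand_succAbove (α : AlternatingMap ℝ g ℝ (Fin (k + 1)))
    (x : Fin (k + 2) → g) (s : Fin (k + 2)) (m : Fin (k + 1)) :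
    ceSummand α x s (s.succAbove m) + ceSummand α x (s.succAbove m) s =
      (-1) ^ ((s : ℕ) + 1) * α (update (s.removeNth x) m ⁅x s, s.removeNth x m⁆) := by
  rcases lt_or_ge m.castSucc s with h | h
  · have hst : (m : ℕ) < s := h
    simp only [ceSummand, Fin.succAbove_of_castSucc_lt _ _ h, Fin.val_castSucc,
      dif_neg (by omega : ¬ (s : ℕ) < m), dif_pos hst, zero_add, Fin.castLT_castSucc]
    rw [α.map_cons_removeNth, ← lie_skew, α.map_update_neg, smul_eq_mul, ← mul_assoc, mul_neg,
      neg_one_pow_add_mul_neg_one_pow, pow_succ, Fin.removeNth, Fin.succAbove_of_castSucc_lt _ _ h]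
    ring
  · have hst : (s : ℕ) ≤ m := h
    simp only [ceSummand, Fin.succAbove_of_le_castSucc _ _ h, Fin.val_succ,
      dif_neg (by omega : ¬ (m : ℕ) + 1 < s), dif_pos (by omega : (s : ℕ) < m + 1), add_zero]
    rw [Fin.removeNth_castLT_removeNth_succ x hst, α.map_cons_removeNth, smul_eq_mul,
      ← mul_assoc, show (s : ℕ) + (m + 1) = m + (s + 1) by omega,
      neg_one_pow_add_mul_neg_one_pow, Fin.removeNth, Fin.succAbove_of_le_castSucc _ _ h]

theorem ceD_succ_apply_eq_zero_of_lie_eq_zero (α : AlternatingMap ℝ g ℝ (Fin (k + 1)))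
    {x : Fin (k + 2) → g} (hx : ∀ i j, ⁅x i, x j⁆ = 0) : ceD g α x = 0 := by
  rw [ceD_succ_apply]
  refine Finset.sum_eq_zero fun i _ => Finset.sum_eq_zero fun j _ => ?_
  rw [ceSummand]
  split_ifs
  · rw [hx, α.map_coord_zero 0 rfl, mul_zero]
  · rfl

/-- Only the terms of `dα(x)` that bracket `x s` with another entry survive. -/
theorem ceD_succ_apply_eq_compLinearMapDeriv (α : AlternatingMap ℝ g ℝ (Fin (k + 1)))
    (x : Fin (k + 2) → g) (s : Fin (k + 2))
    (hs : ∀ v : Fin (k + 1) → g, (∃ r, v r = x s) → α v = 0) :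
    ceD g α x = (-1) ^ ((s : ℕ) + 1) *
      α.compLinearMapDeriv (LieAlgebra.ad ℝ g (x s)) (s.removeNth x) := by
  have hoff (m m' : Fin (k + 1)) : ceSummand α x (s.succAbove m) (s.succAbove m') = 0 :=
    ceSummand_eq_zero_of_ne α hs (Fin.succAbove_ne _ _) (Fin.succAbove_ne _ _)
  have hss : ceSummand α x s s = 0 := dif_neg (lt_irrefl _)
  rw [ceD_succ_apply, AlternatingMap.compLinearMapDeriv_apply, Finset.mul_sum]
  simp only [Fin.sum_univ_succAbove _ s, hoff, hss, Finset.sum_const_zero, add_zero, zero_add,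
    ← Finset.sum_add_distrib, ceSummand_add_ceSummand_succAbove]
  rfl

end CEDifferential

theorem ceD_eq_zero_of_isCompl {g : Type*} [LieRing g] [LieAlgebra ℝ g] [FiniteDimensional ℝ g]
    (hunimod : ∀ x : g, LinearMap.trace ℝ g (LieAlgebra.ad ℝ g x) = 0) {n : ℕ}
    {p q : LieSubalgebra ℝ g} (hpq : IsCompl p.toSubmodule q.toSubmodule)
    (hp : finrank ℝ p.toSubmodule = n) (habp : ∀ x ∈ p, ∀ y ∈ p, ⁅x, y⁆ = (0 : g))
    (habq : ∀ x ∈ q, ∀ y ∈ q, ⁅x, y⁆ = (0 : g)) (α : AlternatingMap ℝ g ℝ (Fin n))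
    (hα : ∀ x : Fin n → g, (∃ i, x i ∈ q) → α x = 0) :
    ceD g α = 0 := by
  cases n with
  | zero => rfl
  | succ k =>
    rw [← coe_ceDMultilinear]
    suffices ceDMultilinear α = 0 by rw [this]; rfl
    refine MultilinearMap.ext_of_codisjoint hpq.codisjoint fun x hx => ?_
    rw [coe_ceDMultilinear, zero_apply]
    by_cases hq : ∃ s, x s ∈ q
    · obtain ⟨s, hs⟩ := hq
      rw [ceD_succ_apply_eq_compLinearMapDeriv α x s fun v ⟨r, hr⟩ => hα v ⟨r, hr ▸ hs⟩,
        α.compLinearMapDeriv_eq_trace_smul_of_isCompl hpq (by simpa using hp) hα _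
          fun z hz => habq _ hs _ hz, hunimod, zero_smul, AlternatingMap.zero_apply, mul_zero]
    · simp only [not_exists] at hq
      have hxp s : x s ∈ p := (hx s).resolve_right (hq s)
      exact ceD_succ_apply_eq_zero_of_lie_eq_zero α fun i j => habp _ (hxp i) _ (hxp j)

theorem ceD_vanishes_on_pure_top_types_general
    (g : Type*) [LieRing g] [LieAlgebra ℝ g] [FiniteDimensional ℝ g]
    (hunimod : ∀ x : g, LinearMap.trace ℝ g (LieAlgebra.ad ℝ g x) = 0)
    (n : ℕ)
    (p q : LieSubalgebra ℝ g)
    (hcompl : IsCompl p.toSubmodule q.toSubmodule)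
    (hp : Module.finrank ℝ p.toSubmodule = n)
    (hq : Module.finrank ℝ q.toSubmodule = n)
    (habp : ∀ x ∈ p, ∀ y ∈ p, ⁅x, y⁆ = (0 : g))
    (habq : ∀ x ∈ q, ∀ y ∈ q, ⁅x, y⁆ = (0 : g)) :
    (∀ α : AlternatingMap ℝ g ℝ (Fin n),
        (∀ x : Fin n → g, (∃ i, x i ∈ q) → α x = 0) → ceD g α = 0) ∧
    (∀ α : AlternatingMap ℝ g ℝ (Fin n),
        (∀ x : Fin n → g, (∃ i, x i ∈ p) → α x = 0) → ceD g α = 0) :=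
  ⟨ceD_eq_zero_of_isCompl hunimod hcompl hp habp habq,
    ceD_eq_zero_of_isCompl hunimod hcompl.symm hq habq habp⟩

/-- On a `2n`-dimensional unimodular real Lie algebra with an
Abelian linear D-complex structure, the Chevalley–Eilenberg differential vanishes
on forms of type `(n,0)` and of type `(0,n)`. -/
theorem ceD_vanishes_on_pure_top_types
    (g : Type*) [LieRing g] [LieAlgebra ℝ g] [FiniteDimensional ℝ g]
    (hunimod : ∀ x : g, LinearMap.trace ℝ g (LieAlgebra.ad ℝ g x) = 0)
    (n : ℕ) (hg : Module.finrank ℝ g = 2 * n)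
    (p q : LieSubalgebra ℝ g)
    (hcompl : IsCompl p.toSubmodule q.toSubmodule)
    (hp : Module.finrank ℝ p.toSubmodule = n)
    (hq : Module.finrank ℝ q.toSubmodule = n)
    (habp : ∀ x ∈ p, ∀ y ∈ p, ⁅x, y⁆ = (0 : g))
    (habq : ∀ x ∈ q, ∀ y ∈ q, ⁅x, y⁆ = (0 : g)) :
    (∀ α : AlternatingMap ℝ g ℝ (Fin n),
        (∀ x : Fin n → g, (∃ i, x i ∈ q) → α x = 0) → ceD g α = 0) ∧
    (∀ α : AlternatingMap ℝ g ℝ (Fin n),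
        (∀ x : Fin n → g, (∃ i, x i ∈ p) → α x = 0) → ceD g α = 0) :=
  ceD_vanishes_on_pure_top_types_general g hunimod n p q hcompl hp hq habp habq

end
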